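/- Let X ⊆ ℝᵐ and Y ⊆ ℝˡ be nonempty closed convex sets, Z = X × Y, and let f : Z → ℝ be differentiable, convex in x for each fixed y, and concave in y for each fixed x. Define F(x,y) = (∇ₓ f(x,y), −∇_y f(x,y)). Let X′ ⊆ X and Y′ ⊆ Y be nonempty sets each of Euclidean diameter at most D, and let z = (x,y) ∈ X′ × Y′. Then the duality gap satisfies dg(z) = sup_{y′ ∈ Y′} f(x,y′) − inf_{x′ ∈ X′} f(x′,y) ≤ √2 · D · r^tan_{(F,Z)}(z). -/

import Mathlib

open scoped RealInnerProductSpace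

/-- The tangent residual `r^tan_{(F,Z)}(z) = inf_{a ∈ N_Z(z)} ‖F z + a‖`. -/
noncomputable def rtan {E : Type*} [NormedAddCommGroup E] [InnerProductSpace ℝ E]
    (F : E → E) (Z : Set E) (z : E) : ℝ :=
  sInf ((fun a => ‖F z + a‖) '' {v | ∀ z' ∈ Z, ⟪v, z' - z⟫ ≤ 0})

/-! Convexity in `x` and concavity in `y` give `f(x,y') - f(x',y) ≤ ⟪F z, z - z'⟫` for
`z' = (x',y')`. A vector `a` of the normal cone at `z` has `⟪a, z - z'⟫ ≥ 0`, so this is at most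
`⟪F z + a, z - z'⟫ ≤ ‖F z + a‖ ‖z - z'‖`, and `‖z - z'‖ ≤ √2 D` in the `ℓ²` product. Taking the
infimum over `a`, then the supremum over `y'` and the infimum over `x'`, gives the bound. -/

section
variable {E : Type*} [NormedAddCommGroup E] [NormedSpace ℝ E] {g : E → ℝ} {g' : E →L[ℝ] ℝ}
  {S : Set E} {x x' : E}

theorem ConvexOn.apply_sub_le_sub_of_hasFDerivAt (hg : ConvexOn ℝ S g) (hx : x ∈ S) (hx' : x' ∈ S)
    (hd : HasFDerivAt g g' x) : g' (x' - x) ≤ g x' - g x := by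
  have hline : ConvexOn ℝ (Set.Icc 0 1) (g ∘ AffineMap.lineMap (k := ℝ) x x') :=
    (hg.comp_affineMap _).subset (fun t ht => hg.1.lineMap_mem hx hx' ht) (convex_Icc 0 1)
  have hderiv : HasDerivAt (g ∘ AffineMap.lineMap (k := ℝ) x x') (g' (x' - x)) 0 := by
    refine HasFDerivAt.comp_hasDerivAt (0 : ℝ) ?_ AffineMap.hasDerivAt_lineMap
    simpa using hd
  simpa [slope_def_field] using hline.le_slope_of_hasDerivAt (by simp) (by simp) zero_lt_one hderiv

theorem ConcaveOn.sub_le_apply_sub_of_hasFDerivAt (hg : ConcaveOn ℝ S g) (hx : x ∈ S)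
    (hx' : x' ∈ S) (hd : HasFDerivAt g g' x) : g x' - g x ≤ g' (x' - x) := by
  have := hg.neg.apply_sub_le_sub_of_hasFDerivAt hx hx' hd.neg
  simp only [neg_apply, Pi.neg_apply] at this
  linarith

end

theorem inner_sub_le_norm_mul_rtan {E : Type*} [NormedAddCommGroup E] [InnerProductSpace ℝ E]
    {F : E → E} {Z : Set E} {z z' : E} (hz' : z' ∈ Z) :
    ⟪F z, z - z'⟫ ≤ ‖z - z'‖ * rtan F Z z := by
  rw [rtan, ← smul_eq_mul, ← Real.sInf_smul_of_nonneg (norm_nonneg _)]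
  refine le_csInf (((Set.nonempty_of_mem (x := 0) fun _ _ => by simp).image _).smul_set) ?_
  rintro _ ⟨_, ⟨a, ha, rfl⟩, rfl⟩
  have hnormal : 0 ≤ ⟪a, z - z'⟫ := by
    rw [← neg_sub, inner_neg_right, neg_nonneg]
    exact ha z' hz'
  calc ⟪F z, z - z'⟫ ≤ ⟪F z + a, z - z'⟫ := by rw [inner_add_left]; linarith
    _ ≤ ‖F z + a‖ * ‖z - z'‖ := real_inner_le_norm _ _
    _ = ‖z - z'‖ • ‖F z + a‖ := by rw [smul_eq_mul, mul_comm]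

theorem rtan_nonneg {E : Type*} [NormedAddCommGroup E] [InnerProductSpace ℝ E]
    (F : E → E) (Z : Set E) (z : E) : 0 ≤ rtan F Z z :=
  Real.sInf_nonneg <| Set.forall_mem_image.2 fun _ _ => norm_nonneg _

theorem WithLp.prod_dist_le_sqrt_two_mul {α β : Type*} [SeminormedAddCommGroup α]
    [SeminormedAddCommGroup β] {p q : WithLp 2 (α × β)} {D : ℝ} (h₁ : dist p.fst q.fst ≤ D)
    (h₂ : dist p.snd q.snd ≤ D) : dist p q ≤ √2 * D := by
  have hD : 0 ≤ D := dist_nonneg.trans h₁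
  rw [WithLp.prod_dist_eq_of_L2, ← Real.sqrt_sq hD, ← Real.sqrt_mul zero_le_two]
  gcongr
  nlinarith [dist_nonneg (x := p.fst) (y := q.fst), dist_nonneg (x := p.snd) (y := q.snd)]

@[fun_prop]
theorem WithLp.prod_differentiable_toLp (𝕜 : Type*) {α β : Type*} [NontriviallyNormedField 𝕜]
    [NormedAddCommGroup α] [NormedSpace 𝕜 α] [NormedAddCommGroup β] [NormedSpace 𝕜 β]
    (p : ENNReal) [Fact (1 ≤ p)] : Differentiable 𝕜 (@WithLp.toLp p (α × β)) :=
  (WithLp.prodContinuousLinearEquiv p 𝕜 α β).symm.differentiable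

theorem csSup_image_sub_csInf_image_le {α β : Type*} {g : α → ℝ} {h : β → ℝ} {s : Set α}
    {t : Set β} {c : ℝ} (hs : s.Nonempty) (ht : t.Nonempty)
    (H : ∀ a ∈ s, ∀ b ∈ t, g a - h b ≤ c) : sSup (g '' s) - sInf (h '' t) ≤ c := by
  rw [sub_le_comm]
  refine le_csInf (ht.image h) (Set.forall_mem_image.2 fun b hb => ?_)
  rw [sub_le_iff_le_add]
  refine csSup_le (hs.image g) (Set.forall_mem_image.2 fun a ha => ?_)
  linarith [H a ha b hb]

section
variable {E₁ E₂ : Type*} [NormedAddCommGroup E₁] [InnerProductSpace ℝ E₁] [CompleteSpace E₁]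
  [NormedAddCommGroup E₂] [InnerProductSpace ℝ E₂] [CompleteSpace E₂]

noncomputable def saddleOperator (f : WithLp 2 (E₁ × E₂) → ℝ) (p : WithLp 2 (E₁ × E₂)) :
    WithLp 2 (E₁ × E₂) :=
  WithLp.toLp 2 (gradient (fun x => f (WithLp.toLp 2 (x, p.snd))) p.fst,
    -gradient (fun y => f (WithLp.toLp 2 (p.fst, y))) p.snd)

theorem sub_le_inner_saddleOperator {f : WithLp 2 (E₁ × E₂) → ℝ} {X : Set E₁} {Y : Set E₂}
    {x x' : E₁} {y y' : E₂} (hcvx : ConvexOn ℝ X fun u => f (WithLp.toLp 2 (u, y)))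
    (hccv : ConcaveOn ℝ Y fun v => f (WithLp.toLp 2 (x, v)))
    (hx : x ∈ X) (hx' : x' ∈ X) (hy : y ∈ Y) (hy' : y' ∈ Y)
    (hfx : DifferentiableAt ℝ (fun u => f (WithLp.toLp 2 (u, y))) x)
    (hfy : DifferentiableAt ℝ (fun v => f (WithLp.toLp 2 (x, v))) y) :
    f (WithLp.toLp 2 (x, y')) - f (WithLp.toLp 2 (x', y)) ≤
      ⟪saddleOperator f (WithLp.toLp 2 (x, y)), WithLp.toLp 2 (x, y) - WithLp.toLp 2 (x', y')⟫ := by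
  have h₁ := hcvx.apply_sub_le_sub_of_hasFDerivAt hx hx' hfx.hasFDerivAt
  have h₂ := hccv.sub_le_apply_sub_of_hasFDerivAt hy hy' hfy.hasFDerivAt
  simp only [saddleOperator, WithLp.prod_inner_apply, WithLp.ofLp_sub,
    Prod.fst_sub, Prod.snd_sub, WithLp.toLp_fst, WithLp.toLp_snd, inner_neg_left,
    inner_gradient_left, map_sub] at h₁ h₂ ⊢
  linarith

end

theorem duality_gap_le_sqrt_two_D_mul_tangent_residual_general {m l : ℕ}
    (X : Set (EuclideanSpace ℝ (Fin m))) (Y : Set (EuclideanSpace ℝ (Fin l)))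
    (f : WithLp 2 (EuclideanSpace ℝ (Fin m) × EuclideanSpace ℝ (Fin l)) → ℝ)
    (hdiff : Differentiable ℝ f)
    (hcvx : ∀ y ∈ Y, ConvexOn ℝ X fun x' =>
      f ((WithLp.equiv 2 (EuclideanSpace ℝ (Fin m) × EuclideanSpace ℝ (Fin l))).symm (x', y)))
    (hccv : ∀ x ∈ X, ConcaveOn ℝ Y fun y' =>
      f ((WithLp.equiv 2 (EuclideanSpace ℝ (Fin m) × EuclideanSpace ℝ (Fin l))).symm (x, y')))
    (X' : Set (EuclideanSpace ℝ (Fin m))) (Y' : Set (EuclideanSpace ℝ (Fin l)))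
    (hX'ne : X'.Nonempty) (hY'ne : Y'.Nonempty) (hX' : X' ⊆ X) (hY' : Y' ⊆ Y)
    (D : ℝ)
    (hX'diam : ∀ a ∈ X', ∀ b ∈ X', dist a b ≤ D)
    (hY'diam : ∀ a ∈ Y', ∀ b ∈ Y', dist a b ≤ D)
    (x : EuclideanSpace ℝ (Fin m)) (y : EuclideanSpace ℝ (Fin l))
    (hx : x ∈ X') (hy : y ∈ Y') :
    sSup ((fun y' => f ((WithLp.equiv 2 _).symm (x, y'))) '' Y') -
        sInf ((fun x' => f ((WithLp.equiv 2 _).symm (x', y))) '' X') ≤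
      Real.sqrt 2 * D *
        rtan
          (fun p => (WithLp.equiv 2 _).symm
            (gradient (fun x' => f ((WithLp.equiv 2 _).symm (x', (WithLp.equiv 2 _ p).2)))
              ((WithLp.equiv 2 _ p).1),
             -gradient (fun y' => f ((WithLp.equiv 2 _).symm ((WithLp.equiv 2 _ p).1, y')))
              ((WithLp.equiv 2 _ p).2)))
          {p | (WithLp.equiv 2 _ p).1 ∈ X ∧ (WithLp.equiv 2 _ p).2 ∈ Y}
          ((WithLp.equiv 2 _).symm (x, y)) := by
  refine csSup_image_sub_csInf_image_le hY'ne hX'ne fun y' hy' x' hx' => ?_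
  have hz' : WithLp.toLp 2 (x', y') ∈ {p : WithLp 2 _ | p.fst ∈ X ∧ p.snd ∈ Y} :=
    ⟨hX' hx', hY' hy'⟩
  calc f (WithLp.toLp 2 (x, y')) - f (WithLp.toLp 2 (x', y))
      ≤ ⟪saddleOperator f (WithLp.toLp 2 (x, y)), WithLp.toLp 2 (x, y) - WithLp.toLp 2 (x', y')⟫ :=
        sub_le_inner_saddleOperator (hcvx y (hY' hy)) (hccv x (hX' hx)) (hX' hx) (hX' hx')
          (hY' hy) (hY' hy') (by fun_prop) (by fun_prop)
    _ ≤ dist (WithLp.toLp 2 (x, y)) (WithLp.toLp 2 (x', y')) *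
          rtan (saddleOperator f) {p | p.fst ∈ X ∧ p.snd ∈ Y} (WithLp.toLp 2 (x, y)) := by
        rw [dist_eq_norm]
        exact inner_sub_le_norm_mul_rtan hz'
    _ ≤ √2 * D * rtan (saddleOperator f) {p | p.fst ∈ X ∧ p.snd ∈ Y} (WithLp.toLp 2 (x, y)) :=
        mul_le_mul_of_nonneg_right
          (WithLp.prod_dist_le_sqrt_two_mul (hX'diam x hx x' hx') (hY'diam y hy y' hy'))
          (rtan_nonneg _ _ _)

/-- The duality gap bound for convex-concave saddle point problems: with
`Z = X × Y` (as an `ℓ²` product), `F(x,y) = (∇ₓ f(x,y), -∇_y f(x,y))`, nonempty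
`X' ⊆ X`, `Y' ⊆ Y` of diameter at most `D`, and `z = (x,y) ∈ X' × Y'`, one has
`sup_{y' ∈ Y'} f(x,y') - inf_{x' ∈ X'} f(x',y) ≤ √2 · D · r^tan_{(F,Z)}(z)`. -/
theorem duality_gap_le_sqrt_two_D_mul_tangent_residual {m l : ℕ}
    (X : Set (EuclideanSpace ℝ (Fin m))) (Y : Set (EuclideanSpace ℝ (Fin l)))
    (hXne : X.Nonempty) (hXcl : IsClosed X) (hXconv : Convex ℝ X)
    (hYne : Y.Nonempty) (hYcl : IsClosed Y) (hYconv : Convex ℝ Y)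
    (f : WithLp 2 (EuclideanSpace ℝ (Fin m) × EuclideanSpace ℝ (Fin l)) → ℝ)
    (hdiff : Differentiable ℝ f)
    (hcvx : ∀ y ∈ Y, ConvexOn ℝ X fun x' =>
      f ((WithLp.equiv 2 (EuclideanSpace ℝ (Fin m) × EuclideanSpace ℝ (Fin l))).symm (x', y)))
    (hccv : ∀ x ∈ X, ConcaveOn ℝ Y fun y' =>
      f ((WithLp.equiv 2 (EuclideanSpace ℝ (Fin m) × EuclideanSpace ℝ (Fin l))).symm (x, y')))
    (X' : Set (EuclideanSpace ℝ (Fin m))) (Y' : Set (EuclideanSpace ℝ (Fin l)))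
    (hX'ne : X'.Nonempty) (hY'ne : Y'.Nonempty) (hX' : X' ⊆ X) (hY' : Y' ⊆ Y)
    (D : ℝ)
    (hX'diam : ∀ a ∈ X', ∀ b ∈ X', dist a b ≤ D)
    (hY'diam : ∀ a ∈ Y', ∀ b ∈ Y', dist a b ≤ D)
    (x : EuclideanSpace ℝ (Fin m)) (y : EuclideanSpace ℝ (Fin l))
    (hx : x ∈ X') (hy : y ∈ Y') :
    sSup ((fun y' => f ((WithLp.equiv 2 _).symm (x, y'))) '' Y') -
        sInf ((fun x' => f ((WithLp.equiv 2 _).symm (x', y))) '' X') ≤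
      Real.sqrt 2 * D *
        rtan
          (fun p => (WithLp.equiv 2 _).symm
            (gradient (fun x' => f ((WithLp.equiv 2 _).symm (x', (WithLp.equiv 2 _ p).2)))
              ((WithLp.equiv 2 _ p).1),
             -gradient (fun y' => f ((WithLp.equiv 2 _).symm ((WithLp.equiv 2 _ p).1, y')))
              ((WithLp.equiv 2 _ p).2)))
          {p | (WithLp.equiv 2 _ p).1 ∈ X ∧ (WithLp.equiv 2 _ p).2 ∈ Y}
          ((WithLp.equiv 2 _).symm (x, y)) :=
  duality_gap_le_sqrt_two_D_mul_tangent_residual_general X Y f hdiff hcvx hccv X' Y' hX'ne hY'ne hX'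
    hY' D hX'diam hY'diam x y hx hy
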